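/- Let C be an abelian category and (𝒞, 𝒲, 𝓕) a triple of classes of objects of C such that 𝒲 is closed under direct summands and has the 2-out-of-3 property for short exact sequences, and both (𝒞, 𝒲 ∩ 𝓕) and (𝒞 ∩ 𝒲, 𝓕) are complete cotorsion pairs in C. Let p : X → Y be an epimorphism with kernel in 𝒲 ∩ 𝓕 and i : Y → Z a monomorphism with cokernel in 𝒞 ∩ 𝒲. Then there exist a monomorphism j : X → U with cokernel in 𝒞 ∩ 𝒲 and an epimorphism q : U → Z with kernel in 𝒲 ∩ 𝓕 such that q ∘ j = i ∘ p. -/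

import Mathlib

open CategoryTheory CategoryTheory.Limits

universe v u

variable {C : Type u} [Category.{v} C] [Abelian C]

/-- `Ext¹(A, B) = 0`, phrased as: every short exact sequence `0 → B → E → A → 0`
splits. -/
def Ext1Zero (A B : C) : Prop :=
  ∀ (E : C) (i : B ⟶ E) (p : E ⟶ A) (w : i ≫ p = 0),
    (ShortComplex.mk i p w).ShortExact → ∃ s : A ⟶ E, s ≫ p = 𝟙 A

/-- The right `Ext¹`-orthogonal class `S^⊥` of a class of objects `S`. -/
def rightPerp (S : Set C) : Set C := {B | ∀ A ∈ S, Ext1Zero A B}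

/-- The left `Ext¹`-orthogonal class `⊥S` of a class of objects `S`. -/
def leftPerp (S : Set C) : Set C := {A | ∀ B ∈ S, Ext1Zero A B}

/-- `(𝓐, 𝓑)` is a cotorsion pair: `𝓐 = ⊥𝓑` and `𝓑 = 𝓐^⊥`. -/
structure IsCotorsionPair (𝓐 𝓑 : Set C) : Prop where
  left_eq : 𝓐 = leftPerp 𝓑
  right_eq : 𝓑 = rightPerp 𝓐

/-- `(𝓐, 𝓑)` is a complete cotorsion pair: a cotorsion pair admitting approximation
sequences `0 → X → B_X → A_X → 0` and `0 → B^X → A^X → X → 0` for every object `X`. -/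
structure IsCompleteCotorsionPair (𝓐 𝓑 : Set C) extends IsCotorsionPair 𝓐 𝓑 : Prop where
  approx₁ : ∀ X : C, ∃ (B A : C) (i : X ⟶ B) (p : B ⟶ A) (w : i ≫ p = 0),
    (ShortComplex.mk i p w).ShortExact ∧ B ∈ 𝓑 ∧ A ∈ 𝓐
  approx₂ : ∀ X : C, ∃ (B A : C) (i : B ⟶ A) (p : A ⟶ X) (w : i ≫ p = 0),
    (ShortComplex.mk i p w).ShortExact ∧ B ∈ 𝓑 ∧ A ∈ 𝓐


/-- The class `𝒲` is closed under direct summands (equivalently, retracts). -/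
def SummandClosed (𝒲 : Set C) : Prop :=
  ∀ (X W : C), W ∈ 𝒲 → (∃ (s : X ⟶ W) (r : W ⟶ X), s ≫ r = 𝟙 X) → X ∈ 𝒲

/-- The class `𝒲` has the 2-out-of-3 property for short exact sequences. -/
def TwoOutOfThreeSES (𝒲 : Set C) : Prop :=
  ∀ (X Y Z : C) (i : X ⟶ Y) (p : Y ⟶ Z) (w : i ≫ p = 0),
    (ShortComplex.mk i p w).ShortExact →
      (X ∈ 𝒲 → Y ∈ 𝒲 → Z ∈ 𝒲) ∧ (X ∈ 𝒲 → Z ∈ 𝒲 → Y ∈ 𝒲) ∧ (Y ∈ 𝒲 → Z ∈ 𝒲 → X ∈ 𝒲)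


/-!
The complete cotorsion pair `(𝒞, 𝒲 ∩ 𝓕)` factors every morphism `f : X ⟶ Z` as a
monomorphism `j` with cokernel in `𝒞` followed by an epimorphism `q` with kernel in `𝒲 ∩ 𝓕`:
embed `X` into `T ⊞ Z` by `(m, f)`, where `m : X ⟶ T` is a special `(𝒲 ∩ 𝓕)`-preenvelope, and
pull back a special `𝒞`-precover of the cokernel of this embedding. For `f = p ≫ i` the
kernel–cokernel sequence of the composition, `0 ⟶ ker f ⟶ ker q ⟶ coker j ⟶ coker f ⟶ 0`, has
`ker f ≅ ker p`, `ker q` and `coker f ≅ coker i` in `𝒲`, so `coker j ∈ 𝒲` by two applications of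
the 2-out-of-3 property.
-/

section KernelCokernelComp

variable {X Y Z : C} (f : X ⟶ Y) (g : Y ⟶ Z)

lemma shortExact_kernel_map_comp [Epi f] :
    (ShortComplex.mk (kernel.map f (f ≫ g) (𝟙 _) g (by simp))
      (kernel.map (f ≫ g) g f (𝟙 _) (by simp)) (by cat_disch)).ShortExact := by
  have hexact := kernelCokernelCompSequence_exact f g
  have : Mono (kernel.map f (f ≫ g) (𝟙 _) g (by simp)) :=
    mono_of_mono_fac (kernel.lift_ι _ _ _)
  refine ShortComplex.ShortExact.mk' (hexact.exact 0) this ?_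
  exact (hexact.exact 1).epi_f (IsZero.eq_of_tgt (isZero_cokernel_of_epi f) _ _)

lemma shortExact_cokernel_map_comp [Mono g] :
    (ShortComplex.mk (cokernel.map f (f ≫ g) (𝟙 _) g (by simp))
      (cokernel.map (f ≫ g) g f (𝟙 _) (by simp)) (by cat_disch)).ShortExact := by
  have hexact := kernelCokernelCompSequence_exact f g
  have : Epi (cokernel.map (f ≫ g) g f (𝟙 _) (by simp)) :=
    epi_of_epi_fac (cokernel.π_desc _ _ _)
  refine ShortComplex.ShortExact.mk' (hexact.exact 3) ?_ this
  exact (hexact.exact 2).mono_g (IsZero.eq_of_src (isZero_kernel_of_mono g) _ _)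

end KernelCokernelComp

namespace TwoOutOfThreeSES

variable {𝒲 : Set C}

lemma mem_of_exact (h23 : TwoOutOfThreeSES 𝒲) {A B M D : C} {a : A ⟶ B} {b : B ⟶ M}
    {c : M ⟶ D} [Mono a] [Epi c] {wab : a ≫ b = 0} {wbc : b ≫ c = 0}
    (hab : (ShortComplex.mk a b wab).Exact) (hbc : (ShortComplex.mk b c wbc).Exact)
    (hA : A ∈ 𝒲) (hB : B ∈ 𝒲) (hD : D ∈ 𝒲) : M ∈ 𝒲 := by
  -- split `0 → A → B → M → D → 0` at the image `kernel c` of `b`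
  have : Epi (kernel.lift c b wbc) := hbc.epi_kernelLift
  have w : a ≫ kernel.lift c b wbc = 0 := by cat_disch
  let φ : ShortComplex.mk a (kernel.lift c b wbc) w ⟶ ShortComplex.mk a b wab :=
    ShortComplex.homMk (𝟙 _) (𝟙 _) (kernel.ι c) (by simp) (by simp)
  have : Epi φ.τ₁ := inferInstanceAs (Epi (𝟙 A))
  have : IsIso φ.τ₂ := inferInstanceAs (IsIso (𝟙 B))
  have : Mono φ.τ₃ := inferInstanceAs (Mono (kernel.ι c))
  have hleft : (ShortComplex.mk a (kernel.lift c b wbc) w).ShortExact :=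
    .mk' ((ShortComplex.exact_iff_of_epi_of_isIso_of_mono φ).2 hab) inferInstance inferInstance
  have hright : (ShortComplex.mk (kernel.ι c) c (kernel.condition c)).ShortExact :=
    .mk' (ShortComplex.exact_kernel c) inferInstance inferInstance
  exact (h23 _ _ _ _ _ _ hright).2.1 ((h23 _ _ _ _ _ _ hleft).1 hA hB) hD

lemma mem_cokernel_of_mono_of_epi (h23 : TwoOutOfThreeSES 𝒲) {X U Z : C} (j : X ⟶ U)
    (q : U ⟶ Z) [Mono j] [Epi q] (hker : kernel (j ≫ q) ∈ 𝒲) (hkerq : kernel q ∈ 𝒲)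
    (hcok : cokernel (j ≫ q) ∈ 𝒲) : cokernel j ∈ 𝒲 := by
  have hexact := kernelCokernelCompSequence_exact j q
  have h₁ : (ShortComplex.mk (kernel.map (j ≫ q) q j (𝟙 _) (by simp))
      (kernelCokernelCompSequence.δ j q) _).Exact := hexact.exact 1
  have h₂ : (ShortComplex.mk (kernelCokernelCompSequence.δ j q)
      (cokernel.map j (j ≫ q) (𝟙 _) q (by simp)) _).Exact := hexact.exact 2
  have : Mono (kernel.map (j ≫ q) q j (𝟙 _) (by simp)) :=
    mono_of_mono_fac (kernel.lift_ι _ _ _)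
  have : Epi (cokernel.map j (j ≫ q) (𝟙 _) q (by simp)) :=
    epi_of_epi_fac (cokernel.π_desc _ _ _)
  exact h23.mem_of_exact h₁ h₂ hker hkerq hcok

end TwoOutOfThreeSES

lemma CategoryTheory.ShortComplex.ShortExact.of_isPullback {S : ShortComplex C}
    (hS : S.ShortExact) {P M : C} {fst : P ⟶ S.X₂} {snd : P ⟶ M} {g : M ⟶ S.X₃}
    (sq : IsPullback fst snd S.g g) :
    (ShortComplex.mk (sq.lift S.f 0 (by simp)) snd (by simp)).ShortExact := by
  have := hS.mono_f
  have := hS.epi_g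
  have : Epi snd := Abelian.epi_snd_of_isLimit _ _ sq.isLimit
  have : Mono (sq.lift S.f 0 (by simp)) := mono_of_mono_fac (sq.lift_fst _ _ _)
  refine .mk' ?_ ‹_› ‹_›
  refine ShortComplex.exact_of_f_is_kernel _ (KernelFork.IsLimit.ofι' _ _ fun t ht => ?_)
  obtain ⟨u, hu⟩ := KernelFork.IsLimit.lift' hS.fIsKernel (t ≫ fst)
    (by rw [Category.assoc, sq.w, reassoc_of% ht, zero_comp])
  exact ⟨u, sq.hom_ext (by simpa using hu) (by simpa using ht.symm)⟩

namespace Ext1Zero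

variable {A B : C}

lemma exists_lift {S : ShortComplex C} (hS : S.ShortExact) (h : Ext1Zero A S.X₁)
    (g : A ⟶ S.X₃) : ∃ g' : A ⟶ S.X₂, g' ≫ S.g = g := by
  let sq := IsPullback.of_hasPullback S.g g
  obtain ⟨s, hs⟩ := h _ _ _ _ (hS.of_isPullback sq)
  exact ⟨s ≫ pullback.fst S.g g, by rw [Category.assoc, pullback.condition, reassoc_of% hs]⟩

lemma of_iso_left {A' : C} (h : Ext1Zero A B) (e : A' ≅ A) : Ext1Zero A' B := by
  intro E i p w hS
  obtain ⟨g, hg⟩ := h.exists_lift hS e.inv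
  exact ⟨e.hom ≫ g, by simp [hg]⟩

lemma of_iso_right {B' : C} (h : Ext1Zero A B) (e : B' ≅ B) : Ext1Zero A B' := by
  intro E i p w hS
  refine h E (e.inv ≫ i) p (by simp [w]) (ShortComplex.shortExact_of_iso ?_ hS)
  exact ShortComplex.isoMk e (Iso.refl _) (Iso.refl _) (by simp) (by simp)

lemma of_shortExact {S : ShortComplex C} (hS : S.ShortExact) (h₁ : Ext1Zero A S.X₁)
    (h₃ : Ext1Zero A S.X₃) : Ext1Zero A S.X₂ := by
  intro E a b w hE
  have := hS.mono_f
  have := hE.mono_f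
  -- `E / S.X₁` is an extension of `A` by `S.X₃`; split it, then lift the splitting to `E`.
  have eX₃ : cokernel S.f ≅ S.X₃ :=
    IsColimit.coconePointUniqueUpToIso (cokernelIsCokernel _) hS.gIsCokernel
  let eA : cokernel a ≅ A :=
    IsColimit.coconePointUniqueUpToIso (cokernelIsCokernel _) hE.gIsCokernel
  obtain ⟨s₁, hs₁⟩ := (h₃.of_iso_right eX₃).exists_lift
    (shortExact_cokernel_map_comp S.f a) eA.inv
  obtain ⟨s₂, hs₂⟩ := h₁.exists_lift
    (.mk' (ShortComplex.exact_cokernel (S.f ≫ a)) inferInstance inferInstance) s₁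
  refine ⟨s₂, ?_⟩
  have hb : cokernel.π a ≫ eA.hom = b := by
    simpa using IsColimit.comp_coconePointUniqueUpToIso_hom (cokernelIsCokernel a)
      hE.gIsCokernel WalkingParallelPair.one
  dsimp at hs₁ hs₂
  calc s₂ ≫ b
      = s₂ ≫ cokernel.π (S.f ≫ a) ≫ cokernel.map (S.f ≫ a) a S.f (𝟙 E) (by simp) ≫ eA.hom := by
        simp [hb]
    _ = 𝟙 A := by rw [reassoc_of% hs₂, reassoc_of% hs₁, Iso.inv_hom_id]

end Ext1Zero

namespace IsCotorsionPair

variable {𝒜 ℬ : Set C}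

lemma mem_left_of_iso (h : IsCotorsionPair 𝒜 ℬ) {A A' : C} (e : A' ≅ A) (hA : A ∈ 𝒜) :
    A' ∈ 𝒜 := by
  rw [h.left_eq] at hA ⊢
  exact fun B hB => (hA B hB).of_iso_left e

lemma mem_right_of_iso (h : IsCotorsionPair 𝒜 ℬ) {B B' : C} (e : B' ≅ B) (hB : B ∈ ℬ) :
    B' ∈ ℬ := by
  rw [h.right_eq] at hB ⊢
  exact fun A hA => (hB A hA).of_iso_right e

lemma mem_right_of_shortExact (h : IsCotorsionPair 𝒜 ℬ) {S : ShortComplex C}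
    (hS : S.ShortExact) (h₁ : S.X₁ ∈ ℬ) (h₃ : S.X₃ ∈ ℬ) : S.X₂ ∈ ℬ := by
  rw [h.right_eq] at h₁ h₃ ⊢
  exact fun A hA => (h₁ A hA).of_shortExact hS (h₃ A hA)

lemma kernel_comp_mem_right (h : IsCotorsionPair 𝒜 ℬ) {X Y Z : C} (f : X ⟶ Y) (g : Y ⟶ Z)
    [Epi f] (hf : kernel f ∈ ℬ) (hg : kernel g ∈ ℬ) : kernel (f ≫ g) ∈ ℬ :=
  h.mem_right_of_shortExact (shortExact_kernel_map_comp f g) hf hg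

end IsCotorsionPair

namespace IsCompleteCotorsionPair

variable {𝒜 ℬ : Set C}

lemma exists_epi_kernel_mem (h : IsCompleteCotorsionPair 𝒜 ℬ) (M : C) :
    ∃ (A : C) (ψ : A ⟶ M), A ∈ 𝒜 ∧ Epi ψ ∧ kernel ψ ∈ ℬ := by
  obtain ⟨B, A, i, ψ, w, hS, hB, hA⟩ := h.approx₂ M
  exact ⟨A, ψ, hA, hS.epi_g, h.mem_right_of_iso
    ((limit.isLimit _).conePointUniqueUpToIso hS.fIsKernel) hB⟩

lemma exists_factorization_of_mono_of_epi (h : IsCompleteCotorsionPair 𝒜 ℬ) {X V Z : C}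
    (j₀ : X ⟶ V) (q₀ : V ⟶ Z) [Mono j₀] [Epi q₀] (hq₀ : kernel q₀ ∈ ℬ) :
    ∃ (U : C) (j : X ⟶ U) (q : U ⟶ Z),
      Mono j ∧ cokernel j ∈ 𝒜 ∧ Epi q ∧ kernel q ∈ ℬ ∧ j ≫ q = j₀ ≫ q₀ := by
  obtain ⟨A, ψ, hA, hψ, hkerψ⟩ := h.exists_epi_kernel_mem (cokernel j₀)
  let sq := IsPullback.of_hasPullback (cokernel.π j₀) ψ
  have hU := (ShortComplex.ShortExact.mk' (ShortComplex.exact_cokernel j₀) inferInstance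
    inferInstance).of_isPullback sq
  refine ⟨_, _, pullback.fst _ _ ≫ q₀, hU.mono_f, ?_, inferInstance, ?_, by simp⟩
  · exact h.mem_left_of_iso
      ((colimit.isColimit _).coconePointUniqueUpToIso hU.gIsCokernel) hA
  · have : IsIso (kernel.map _ _ _ _ sq.w) := isIso_kernel_map_of_isPullback sq
    exact h.kernel_comp_mem_right _ _ (h.mem_right_of_iso (asIso (kernel.map _ _ _ _ sq.w))
      hkerψ) hq₀

lemma exists_factorization (h : IsCompleteCotorsionPair 𝒜 ℬ) {X Z : C} (f : X ⟶ Z) :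
    ∃ (U : C) (j : X ⟶ U) (q : U ⟶ Z),
      Mono j ∧ cokernel j ∈ 𝒜 ∧ Epi q ∧ kernel q ∈ ℬ ∧ j ≫ q = f := by
  obtain ⟨B, _, m, _, _, hm, hB, -⟩ := h.approx₁ X
  have := hm.mono_f
  have : Mono (biprod.lift m f) := mono_of_mono_fac (biprod.lift_fst m f)
  have hker : kernel (biprod.snd : B ⊞ Z ⟶ Z) ∈ ℬ := h.mem_right_of_iso
    ((limit.isLimit _).conePointUniqueUpToIso (biprod.isKernelSndKernelFork B Z)) hB
  simpa using h.exists_factorization_of_mono_of_epi (biprod.lift m f) biprod.snd hker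

end IsCompleteCotorsionPair

theorem stmt_8_general (𝒞 𝒲 𝓕 : Set C)
    (hsum : SummandClosed 𝒲) (h23 : TwoOutOfThreeSES 𝒲)
    (hpair₁ : IsCompleteCotorsionPair 𝒞 (𝒲 ∩ 𝓕))
    {X Y Z : C} (p : X ⟶ Y) (i : Y ⟶ Z)
    (hp : Epi p) (hpker : kernel p ∈ 𝒲 ∩ 𝓕)
    (hi : Mono i) (hicoker : cokernel i ∈ 𝒞 ∩ 𝒲) :
    ∃ (U : C) (j : X ⟶ U) (q : U ⟶ Z),
      Mono j ∧ cokernel j ∈ 𝒞 ∩ 𝒲 ∧ Epi q ∧ kernel q ∈ 𝒲 ∩ 𝓕 ∧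
      j ≫ q = p ≫ i := by
  obtain ⟨U, j, q, hj, hcokj, hq, hkerq, hjq⟩ := hpair₁.exists_factorization (p ≫ i)
  have hker : kernel (j ≫ q) ∈ 𝒲 := by
    rw [hjq]
    exact hsum _ _ hpker.1 ⟨_, _, (kernelCompMono p i).hom_inv_id⟩
  have hcok : cokernel (j ≫ q) ∈ 𝒲 := by
    rw [hjq]
    exact hsum _ _ hicoker.2 ⟨_, _, (cokernelEpiComp p i).hom_inv_id⟩
  exact ⟨U, j, q, hj, ⟨hcokj, h23.mem_cokernel_of_mono_of_epi j q hker hkerq.1 hcok⟩, hq,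
    hkerq, hjq⟩

/-- Let `C` be an abelian category and `(𝒞, 𝒲, 𝓕)` a triple of classes of objects such
that `𝒲` is closed under direct summands and has the 2-out-of-3 property for short
exact sequences, and `(𝒞, 𝒲 ∩ 𝓕)` and `(𝒞 ∩ 𝒲, 𝓕)` are complete cotorsion pairs.
If `p : X → Y` is an epimorphism with kernel in `𝒲 ∩ 𝓕` and `i : Y → Z` is a
monomorphism with cokernel in `𝒞 ∩ 𝒲`, then there exist a monomorphism `j : X → U`
with cokernel in `𝒞 ∩ 𝒲` and an epimorphism `q : U → Z` with kernel in `𝒲 ∩ 𝓕` such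
that `q ∘ j = i ∘ p`. -/
theorem stmt_8 (𝒞 𝒲 𝓕 : Set C)
    (hsum : SummandClosed 𝒲) (h23 : TwoOutOfThreeSES 𝒲)
    (hpair₁ : IsCompleteCotorsionPair 𝒞 (𝒲 ∩ 𝓕))
    (hpair₂ : IsCompleteCotorsionPair (𝒞 ∩ 𝒲) 𝓕)
    {X Y Z : C} (p : X ⟶ Y) (i : Y ⟶ Z)
    (hp : Epi p) (hpker : kernel p ∈ 𝒲 ∩ 𝓕)
    (hi : Mono i) (hicoker : cokernel i ∈ 𝒞 ∩ 𝒲) :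
    ∃ (U : C) (j : X ⟶ U) (q : U ⟶ Z),
      Mono j ∧ cokernel j ∈ 𝒞 ∩ 𝒲 ∧ Epi q ∧ kernel q ∈ 𝒲 ∩ 𝓕 ∧
      j ≫ q = p ≫ i :=
  stmt_8_general 𝒞 𝒲 𝓕 hsum h23 hpair₁ p i hp hpker hi hicoker
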